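/- arXiv:1601.06523 — 2 statements merged into one kernel-verified Lean document; each statement's English description precedes it below -/
import Mathlib

section
/- Let q₀ > 2, let ξ ∈ L_{q₀} be a real random variable with ‖ξ‖_{L_{q₀}} > 0, and let ξ₁,...,ξ_N be independent copies of ξ. Then for every u ≥ 2, with probability at least 1 − 2 u^{−q₀}, one has ξ_i* ≤ u ‖ξ‖_{L_{q₀}} (eN/i)^{1/q₀} for every 1 ≤ i ≤ N, where (ξ_i*)_{i=1}^N is the non-increasing rearrangement of (|ξ_i|)_{i=1}^N. Moreover, for each fixed i, Pr( ξ_i* ≥ u ‖ξ‖_{L_{q₀}} (eN/i)^{1/q₀} ) ≤ u^{−i q₀}. -/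
open MeasureTheory ProbabilityTheory Real

noncomputable def decRearr {n : ℕ} (x : Fin n → ℝ) : Fin n → ℝ :=
  fun j => |x (Tuple.sort (fun i => -|x i|) j)|

noncomputable def pNorm {Ω : Type*} [MeasurableSpace Ω] (μ : Measure Ω) (Z : Ω → ℝ) (q : ℝ) : ℝ :=
  (∫ ω, |Z ω| ^ q ∂μ) ^ (1 / q)

/-! The `i`-th largest of the `|ξⱼ|` is at least `t` only if some `i + 1` of them are, so by
independence and a union bound over the `N.choose (i + 1)` index sets its tail is at most
`N.choose (i + 1) * P(|ξ| ≥ t) ^ (i + 1)`. At the level `t = u ‖ξ‖_q (eN / (i + 1)) ^ (1 / q)`,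
Markov's inequality in `L_q` and `N.choose k ≤ (eN / k) ^ k` bound this by `u ^ (-(i + 1) q)`;
summing this geometric series over `i` gives the simultaneous bound. -/

open Finset

lemma decRearr_antitone {n : ℕ} (x : Fin n → ℝ) : Antitone (decRearr x) := by
  intro j k hjk
  simpa [decRearr] using Tuple.monotone_sort (fun i => -|x i|) hjk

lemma exists_card_eq_forall_le_abs_of_le_decRearr {n : ℕ} {x : Fin n → ℝ} {i : Fin n} {t : ℝ}
    (h : t ≤ decRearr x i) : ∃ S : Finset (Fin n), #S = i + 1 ∧ ∀ j ∈ S, t ≤ |x j| := by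
  refine ⟨(Iic i).image (Tuple.sort fun i => -|x i|), ?_, ?_⟩
  · rw [card_image_of_injective _ (Equiv.injective _), Fin.card_Iic]
  · simp only [mem_image, mem_Iic, forall_exists_index, and_imp]
    rintro _ a ha rfl
    exact h.trans (decRearr_antitone x ha)

lemma choose_le_exp_one_mul_div_pow (n k : ℕ) :
    (n.choose k : ℝ) ≤ (exp 1 * n / k) ^ k := by
  rcases k.eq_zero_or_pos with rfl | hk
  · simp
  have hk' : (0 : ℝ) < k := Nat.cast_pos.mpr hk
  have hfact : (k : ℝ) ^ k ≤ exp 1 ^ k * k.factorial := by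
    have := pow_div_factorial_le_exp (k : ℝ) hk'.le k
    rwa [← exp_one_pow, div_le_iff₀ (by positivity)] at this
  calc (n.choose k : ℝ) ≤ (n : ℝ) ^ k / k.factorial := Nat.choose_le_pow_div k n
    _ ≤ (exp 1 * n / k) ^ k := by
      rw [div_pow, mul_pow, div_le_div_iff₀ (by positivity) (by positivity)]
      calc (n : ℝ) ^ k * k ^ k ≤ n ^ k * (exp 1 ^ k * k.factorial) := by gcongr
        _ = exp 1 ^ k * n ^ k * k.factorial := by ring

lemma sum_pow_succ_le_two_mul {a : ℝ} (ha₀ : 0 ≤ a) (ha : a ≤ 1 / 2) (n : ℕ) :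
    ∑ i ∈ range n, a ^ (i + 1) ≤ 2 * a := by
  have hgeom : ∑ i ∈ range n, a ^ i ≤ 2 := by
    calc ∑ i ∈ range n, a ^ i ≤ a ^ 0 / (1 - a) := by
          rw [range_eq_Ico]; exact geom_sum_Ico_le_of_lt_one ha₀ (by linarith)
      _ ≤ 2 := by rw [pow_zero, div_le_iff₀ (by linarith)]; linarith
  calc ∑ i ∈ range n, a ^ (i + 1) = a * ∑ i ∈ range n, a ^ i := by
        simp only [mul_sum, pow_succ']
    _ ≤ 2 * a := by nlinarith

section Markov

variable {Ω : Type*} [MeasurableSpace Ω] {μ : Measure Ω}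

lemma pNorm_rpow_self {Z : Ω → ℝ} {q : ℝ} (hq : q ≠ 0) :
    pNorm μ Z q ^ q = ∫ ω, |Z ω| ^ q ∂μ := by
  rw [pNorm, ← rpow_mul (integral_nonneg fun ω => rpow_nonneg (abs_nonneg _) q),
    one_div_mul_cancel hq, rpow_one]

lemma meas_le_abs_le_ofReal_pNorm_div_rpow [IsFiniteMeasure μ] {ξ : Ω → ℝ} {q : ℝ} (hq : 0 < q)
    (hξ : MemLp ξ (ENNReal.ofReal q) μ) {t : ℝ} (ht : 0 < t) :
    μ {ω | t ≤ |ξ ω|} ≤ ENNReal.ofReal ((pNorm μ ξ q / t) ^ q) := by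
  have hint : Integrable (fun ω => |ξ ω| ^ q) μ := by
    simpa [ENNReal.toReal_ofReal hq.le] using
      hξ.integrable_norm_rpow (by simpa using hq) ENNReal.ofReal_ne_top
  have hmarkov := mul_meas_ge_le_integral_of_nonneg
    (ae_of_all μ fun ω => rpow_nonneg (abs_nonneg (ξ ω)) q) hint (t ^ q)
  have hpow : {ω | t ^ q ≤ |ξ ω| ^ q} = {ω | t ≤ |ξ ω|} := by
    ext ω; exact rpow_le_rpow_iff ht.le (abs_nonneg _) hq
  rw [hpow, ← pNorm_rpow_self hq.ne', ← le_div_iff₀' (by positivity), ← div_rpow] at hmarkov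
  · rw [← ofReal_measureReal]
    exact ENNReal.ofReal_le_ofReal hmarkov
  · exact rpow_nonneg (integral_nonneg fun ω => rpow_nonneg (abs_nonneg _) q) _
  · exact ht.le

end Markov

section OrderStatistics

variable {Ω : Type*} [MeasurableSpace Ω] {μ : Measure Ω} {N : ℕ} {X : Fin N → Ω → ℝ}
  {ξ : Ω → ℝ}

lemma measure_le_decRearr_le_choose_mul_pow (hindep : iIndepFun X μ)
    (hid : ∀ j, IdentDistrib (X j) ξ μ μ) (i : Fin N) (t : ℝ) :
    μ {ω | t ≤ decRearr (fun j => X j ω) i}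
      ≤ N.choose ((i : ℕ) + 1) * μ {ω | t ≤ |ξ ω|} ^ ((i : ℕ) + 1) := by
  set k := (i : ℕ) + 1
  set s : Set ℝ := {x | t ≤ |x|}
  have hs : MeasurableSet s := measurableSet_le measurable_const measurable_abs
  calc μ {ω | t ≤ decRearr (fun j => X j ω) i}
      ≤ μ (⋃ S ∈ powersetCard k univ, ⋂ j ∈ S, X j ⁻¹' s) := by
        refine measure_mono fun ω hω => ?_
        obtain ⟨S, hcard, hS⟩ := exists_card_eq_forall_le_abs_of_le_decRearr hω
        exact Set.mem_biUnion (mem_powersetCard_univ.mpr hcard) (Set.mem_iInter₂.mpr hS)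
    _ ≤ ∑ S ∈ powersetCard k univ, μ (⋂ j ∈ S, X j ⁻¹' s) :=
        measure_biUnion_finset_le _ _
    _ = ∑ S ∈ powersetCard k univ, μ (ξ ⁻¹' s) ^ k := by
        refine sum_congr rfl fun S hS => ?_
        rw [hindep.measure_inter_preimage_eq_mul S (sets := fun _ => s) fun _ _ => hs,
          prod_congr rfl fun j _ => (hid j).measure_mem_eq hs, prod_const,
          mem_powersetCard_univ.mp hS]
    _ = N.choose k * μ {ω | t ≤ |ξ ω|} ^ k := by
        rw [sum_const, card_powersetCard, card_univ, Fintype.card_fin, nsmul_eq_mul]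
        rfl

lemma choose_mul_rpow_neg_div_pow_le {u q : ℝ} (hu : 0 < u) {N k : ℕ} (hk : 0 < k)
    (hN : 0 < N) :
    (N.choose k : ℝ) * (u ^ (-q) / (exp 1 * N / k)) ^ k ≤ u ^ (-(k * q)) := by
  have hA : 0 < exp 1 * N / k := by positivity
  calc (N.choose k : ℝ) * (u ^ (-q) / (exp 1 * N / k)) ^ k
      ≤ (exp 1 * N / k) ^ k * (u ^ (-q) / (exp 1 * N / k)) ^ k := by
        gcongr; exact choose_le_exp_one_mul_div_pow N k
    _ = u ^ (-(k * q)) := by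
        rw [← mul_pow, mul_div_cancel₀ _ hA.ne', ← rpow_natCast, ← rpow_mul hu.le]
        ring_nf

theorem measure_tail_decRearr_le [IsFiniteMeasure μ] {q : ℝ} (hq : 0 < q)
    (hξL : MemLp ξ (ENNReal.ofReal q) μ) (hξpos : 0 < pNorm μ ξ q)
    (hindep : iIndepFun X μ) (hid : ∀ j, IdentDistrib (X j) ξ μ μ) {u : ℝ} (hu : 0 < u)
    (i : Fin N) :
    μ {ω | u * pNorm μ ξ q * (Real.exp 1 * N / ((i : ℕ) + 1)) ^ (1 / q)
          ≤ decRearr (fun j => X j ω) i}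
      ≤ ENNReal.ofReal (u ^ (-(((i : ℕ) + 1 : ℝ) * q))) := by
  set A : ℝ := Real.exp 1 * N / ((i : ℕ) + 1)
  have hA : 0 < A := by have := i.pos; positivity
  have hratio : (pNorm μ ξ q / (u * pNorm μ ξ q * A ^ (1 / q))) ^ q = u ^ (-q) / A := by
    rw [show pNorm μ ξ q / (u * pNorm μ ξ q * A ^ (1 / q)) = (u * A ^ (1 / q))⁻¹ by
      field_simp, mul_inv, mul_rpow (by positivity) (by positivity),
      inv_rpow hu.le, inv_rpow (by positivity), ← rpow_mul hA.le, one_div_mul_cancel hq.ne',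
      rpow_one, rpow_neg hu.le, div_eq_mul_inv]
  set t := u * pNorm μ ξ q * A ^ (1 / q)
  have ht : 0 < t := by positivity
  have hreal := choose_mul_rpow_neg_div_pow_le (q := q) hu (Nat.succ_pos i) i.pos
  push_cast at hreal
  calc μ {ω | t ≤ decRearr (fun j => X j ω) i}
      ≤ N.choose ((i : ℕ) + 1) * μ {ω | t ≤ |ξ ω|} ^ ((i : ℕ) + 1) :=
        measure_le_decRearr_le_choose_mul_pow hindep hid i t
    _ ≤ N.choose ((i : ℕ) + 1) * ENNReal.ofReal ((pNorm μ ξ q / t) ^ q) ^ ((i : ℕ) + 1) := by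
        gcongr; exact meas_le_abs_le_ofReal_pNorm_div_rpow hq hξL ht
    _ = ENNReal.ofReal (N.choose ((i : ℕ) + 1) * (u ^ (-q) / A) ^ ((i : ℕ) + 1)) := by
        rw [hratio, ENNReal.ofReal_mul (by positivity), ENNReal.ofReal_pow (by positivity),
          ENNReal.ofReal_natCast]
    _ ≤ ENNReal.ofReal (u ^ (-(((i : ℕ) + 1 : ℝ) * q))) := ENNReal.ofReal_le_ofReal hreal

end OrderStatistics

lemma one_sub_sum_measure_le_measure_forall_le {Ω ι : Type*} [MeasurableSpace Ω] {μ : Measure Ω}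
    [IsProbabilityMeasure μ] [Fintype ι] (f g : ι → Ω → ℝ) :
    1 - ∑ i, μ {ω | g i ω ≤ f i ω} ≤ μ {ω | ∀ i, f i ω ≤ g i ω} := by
  rw [tsub_le_iff_right, ← measure_univ (μ := μ)]
  refine (measure_univ_le_add_compl _).trans (add_le_add_right ?_ _)
  calc μ {ω | ∀ i, f i ω ≤ g i ω}ᶜ ≤ μ (⋃ i, {ω | g i ω ≤ f i ω}) := by
        refine measure_mono fun ω hω => ?_
        obtain ⟨i, hi⟩ := not_forall.mp hω
        exact Set.mem_iUnion.mpr ⟨i, (not_le.mp hi).le⟩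
    _ ≤ ∑ i, μ {ω | g i ω ≤ f i ω} := measure_iUnion_fintype_le _ _

theorem stmt5_general (q₀ : ℝ) (hq₀ : 2 < q₀)
    {Ω : Type} [MeasurableSpace Ω] (μ : Measure Ω) [IsProbabilityMeasure μ]
    (ξ : Ω → ℝ) (hξL : MemLp ξ (ENNReal.ofReal q₀) μ)
    (hξpos : 0 < pNorm μ ξ q₀)
    (N : ℕ) (ξ' : Fin N → Ω → ℝ)
    (hindep : iIndepFun ξ' μ)
    (hid : ∀ i, IdentDistrib (ξ' i) ξ μ μ)
    (u : ℝ) (hu : 2 ≤ u) :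
    ENNReal.ofReal (1 - 2 * u ^ (-q₀))
        ≤ μ {ω | ∀ i : Fin N,
            decRearr (fun i => ξ' i ω) i
              ≤ u * pNorm μ ξ q₀ * (Real.exp 1 * N / ((i : ℕ) + 1)) ^ (1 / q₀)} ∧
    ∀ i : Fin N,
      μ {ω | u * pNorm μ ξ q₀ * (Real.exp 1 * N / ((i : ℕ) + 1)) ^ (1 / q₀)
            ≤ decRearr (fun i => ξ' i ω) i}
        ≤ ENNReal.ofReal (u ^ (-(((i : ℕ) + 1 : ℝ) * q₀))) := by
  have hu₀ : 0 < u := by linarith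
  have tail := measure_tail_decRearr_le (by linarith) hξL hξpos hindep hid hu₀
  refine ⟨?_, tail⟩
  set a := u ^ (-q₀)
  have ha : a ≤ 1 / 2 := calc
    a ≤ u ^ (-1 : ℝ) := rpow_le_rpow_of_exponent_le (by linarith) (by linarith)
    _ ≤ 1 / 2 := by rw [rpow_neg_one, one_div]; exact inv_anti₀ two_pos hu
  have htail_sum : ∑ i : Fin N, μ {ω | u * pNorm μ ξ q₀ * (Real.exp 1 * N / ((i : ℕ) + 1)) ^
      (1 / q₀) ≤ decRearr (fun i => ξ' i ω) i} ≤ ENNReal.ofReal (2 * a) := calc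
    _ ≤ ∑ i : Fin N, ENNReal.ofReal (a ^ ((i : ℕ) + 1)) := by
        refine sum_le_sum fun i _ => (tail i).trans_eq ?_
        rw [← rpow_natCast, ← rpow_mul hu₀.le]
        push_cast
        ring_nf
    _ ≤ ENNReal.ofReal (2 * a) := by
        rw [← ENNReal.ofReal_sum_of_nonneg fun i _ => by positivity,
          Fin.sum_univ_eq_sum_range (fun j => a ^ (j + 1))]
        exact ENNReal.ofReal_le_ofReal (sum_pow_succ_le_two_mul (by positivity) ha N)
  calc ENNReal.ofReal (1 - 2 * a) = 1 - ENNReal.ofReal (2 * a) := by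
        rw [ENNReal.ofReal_sub _ (by positivity), ENNReal.ofReal_one]
    _ ≤ _ := (tsub_le_tsub_left htail_sum 1).trans (one_sub_sum_measure_le_measure_forall_le _ _)

/-- if ξ ∈ L_{q₀} with q₀ > 2, ‖ξ‖_{L_{q₀}} > 0, and ξ₁,...,ξ_N are iid
copies of ξ, then for every u ≥ 2, with probability at least 1 − 2u^{−q₀},
ξ_i* ≤ u ‖ξ‖_{L_{q₀}} (eN/i)^{1/q₀} for every 1 ≤ i ≤ N; moreover for each fixed i,
Pr(ξ_i* ≥ u ‖ξ‖_{L_{q₀}} (eN/i)^{1/q₀}) ≤ u^{−i q₀}. (i : Fin N stands for index i+1.) -/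
theorem stmt5 (q₀ : ℝ) (hq₀ : 2 < q₀)
    {Ω : Type} [MeasurableSpace Ω] (μ : Measure Ω) [IsProbabilityMeasure μ]
    (ξ : Ω → ℝ) (hξm : Measurable ξ) (hξL : MemLp ξ (ENNReal.ofReal q₀) μ)
    (hξpos : 0 < pNorm μ ξ q₀)
    (N : ℕ) (ξ' : Fin N → Ω → ℝ) (hm : ∀ i, Measurable (ξ' i))
    (hindep : iIndepFun ξ' μ)
    (hid : ∀ i, IdentDistrib (ξ' i) ξ μ μ)
    (u : ℝ) (hu : 2 ≤ u) :
    ENNReal.ofReal (1 - 2 * u ^ (-q₀))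
        ≤ μ {ω | ∀ i : Fin N,
            decRearr (fun i => ξ' i ω) i
              ≤ u * pNorm μ ξ q₀ * (Real.exp 1 * N / ((i : ℕ) + 1)) ^ (1 / q₀)} ∧
    ∀ i : Fin N,
      μ {ω | u * pNorm μ ξ q₀ * (Real.exp 1 * N / ((i : ℕ) + 1)) ^ (1 / q₀)
            ≤ decRearr (fun i => ξ' i ω) i}
        ≤ ENNReal.ofReal (u ^ (-(((i : ℕ) + 1 : ℝ) * q₀))) :=
  stmt5_general q₀ hq₀ μ ξ hξL hξpos N ξ' hindep hid u hu
end

section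
/- There exists an absolute constant c > 0 for which the following holds. Let n ≥ 2, let g₁,...,gₙ be independent standard Gaussian random variables, and let (g_j*)_{j=1}^n be the non-increasing rearrangement of (|g_j|)_{j=1}^n. Then for every 1 ≤ j ≤ n/2, E g_j* ≥ c √(log(en/j)). -/
/-!
`g*_{j+1} ≥ t` exactly when at least `j + 1` of the `|gᵢ|` exceed `t`. That count is binomial,
with mean `n p` and variance `n p (1 - p)` where `p = P(|g| ≥ t)`, so by Chebyshev it reaches
`j + 1` with probability at least `1/2` as soon as `n p` is comfortably above `j + 1`; then
`E g*_{j+1} ≥ t / 2` by Markov. With `k = j + 1` and `L = log (e n / k) ≥ 12` take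
`t ^ 2 = L - 6`: the tail bound `p ≥ exp (-t ^ 2) / 9` gives `n p ≥ e ^ 5 k / 9 ≥ 8 k`, and
`t ≥ √L / 2`. When `L < 12` take `t = 1/10`: then `p ≥ 9/10` while `k ≤ n / 2`, and `√L < 5`.
-/

open MeasureTheory ProbabilityTheory Real Finset
open scoped NNReal ENNReal

noncomputable def stdGaussian (n : ℕ) : Measure (Fin n → ℝ) :=
  Measure.pi fun _ => gaussianReal 0 1

lemma le_decRearr_iff {n : ℕ} (x : Fin n → ℝ) (j : Fin n) (t : ℝ) :
    t ≤ decRearr x j ↔ (j : ℕ) < #{i | t ≤ |x i|} := by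
  set σ := Tuple.sort fun i => -|x i|
  have hanti : Antitone fun i => |x (σ i)| := fun a b hab => by
    simpa using Tuple.monotone_sort (fun i => -|x i|) hab
  have hcard : #{i | t ≤ |x (σ i)|} = #{i | t ≤ |x i|} := by
    simp only [card_filter]
    exact Equiv.sum_comp σ fun i => if t ≤ |x i| then 1 else 0
  rw [← hcard]
  exact (Tuple.lt_card_ge_iff_apply_ge_of_antitone hanti).symm

lemma measurable_card_filter_le_abs {n : ℕ} (t : ℝ) :
    Measurable fun x : Fin n → ℝ => #{i | t ≤ |x i|} := by
  simp only [card_filter]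
  exact Finset.measurable_sum _ fun i _ =>
    Measurable.ite (measurableSet_le measurable_const (measurable_pi_apply i).abs)
      measurable_const measurable_const

lemma measurable_decRearr {n : ℕ} (j : Fin n) : Measurable fun x : Fin n → ℝ => decRearr x j := by
  refine measurable_of_Ici fun t => ?_
  have : (fun x : Fin n → ℝ => decRearr x j) ⁻¹' Set.Ici t = {x | (j : ℕ) < #{i | t ≤ |x i|}} := by
    ext x
    exact le_decRearr_iff x j t
  rw [this]
  exact measurableSet_lt measurable_const (measurable_card_filter_le_abs t)

lemma decRearr_le_sum_abs {n : ℕ} (x : Fin n → ℝ) (j : Fin n) : decRearr x j ≤ ∑ i, |x i| :=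
  single_le_sum (f := fun i => |x i|) (fun _ _ => abs_nonneg _) (mem_univ _)

section Counting

variable {Ω ι : Type*} [MeasurableSpace Ω] {μ : Measure Ω} [IsProbabilityMeasure μ]

lemma variance_indicator_one {A : Set Ω} (hA : MeasurableSet A) :
    Var[A.indicator 1; μ] = μ.real A * (1 - μ.real A) := by
  have hsq : A.indicator (1 : Ω → ℝ) ^ 2 = A.indicator 1 := by
    ext ω
    by_cases hω : ω ∈ A <;> simp [hω]
  have hA2 : MemLp (A.indicator (1 : Ω → ℝ)) 2 μ := (memLp_const 1).indicator hA
  rw [variance_eq_sub hA2, hsq, integral_indicator_one hA]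
  ring

lemma half_le_measureReal_lt_card_of_iIndepFun [Fintype ι] {X : ι → Ω → ℝ}
    (hXm : ∀ i, Measurable (X i)) (hX : iIndepFun X μ) {B : Set ℝ} [DecidablePred (· ∈ B)]
    (hB : MeasurableSet B) {j : ℕ} (hj : j < ∑ i, μ.real (X i ⁻¹' B))
    (hvar : 2 * ∑ i, μ.real (X i ⁻¹' B) * (1 - μ.real (X i ⁻¹' B)) ≤
      (∑ i, μ.real (X i ⁻¹' B) - j) ^ 2) :
    1 / 2 ≤ μ.real {ω | j < #{i | X i ω ∈ B}} := by
  set m := ∑ i, μ.real (X i ⁻¹' B)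
  set Y : ι → Ω → ℝ := fun i => (X i ⁻¹' B).indicator 1
  have hYm : ∀ i, MeasurableSet (X i ⁻¹' B) := fun i => hXm i hB
  have hY : ∀ i, MemLp (Y i) 2 μ := fun i => (memLp_const 1).indicator (hYm i)
  have hYind : iIndepFun Y μ :=
    hX.comp (fun _ => B.indicator 1) fun _ => measurable_const.indicator hB
  have hcount : ∀ ω, (#{i | X i ω ∈ B} : ℝ) = (∑ i, Y i) ω := fun ω => by
    rw [Finset.natCast_card_filter, Finset.sum_apply]
    exact Finset.sum_congr rfl fun i _ => by by_cases h : X i ω ∈ B <;> simp [Y, h]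
  have hmean : μ[∑ i, Y i] = m := by
    simp only [Finset.sum_apply]
    rw [integral_finsetSum _ fun i _ => (hY i).integrable one_le_two]
    exact Finset.sum_congr rfl fun i _ => integral_indicator_one (hYm i)
  have hvarS : Var[∑ i, Y i; μ] = ∑ i, μ.real (X i ⁻¹' B) * (1 - μ.real (X i ⁻¹' B)) := by
    rw [IndepFun.variance_sum (fun i _ => hY i) fun i _ k _ hik => hYind.indepFun hik]
    exact Finset.sum_congr rfl fun i _ => variance_indicator_one (hYm i)
  have hgap : 0 < m - j := sub_pos.2 hj
  have hsub : {ω | j < #{i | X i ω ∈ B}}ᶜ ⊆ {ω | m - j ≤ |(∑ i, Y i) ω - μ[∑ i, Y i]|} := by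
    intro ω hω
    rw [Set.mem_compl_iff, Set.mem_ofPred_eq, not_lt] at hω
    have : ((#{i | X i ω ∈ B} : ℕ) : ℝ) ≤ j := by exact_mod_cast hω
    rw [Set.mem_ofPred_eq, hmean, ← hcount, abs_sub_comm]
    exact (sub_le_sub_left this m).trans (le_abs_self _)
  have hcheb : μ.real {ω | j < #{i | X i ω ∈ B}}ᶜ ≤ 1 / 2 := by
    refine (measureReal_mono hsub).trans ?_
    rw [measureReal_def]
    refine ENNReal.toReal_le_of_le_ofReal (by norm_num) ?_
    refine (meas_ge_le_variance_div_sq (memLp_finsetSum' _ fun i _ => hY i) hgap).trans ?_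
    refine ENNReal.ofReal_le_ofReal ?_
    rw [hvarS, div_le_iff₀ (by positivity)]
    linarith
  have hunion := measureReal_union_le (μ := μ) {ω | j < #{i | X i ω ∈ B}}
    {ω | j < #{i | X i ω ∈ B}}ᶜ
  rw [Set.union_compl_self, probReal_univ] at hunion
  linarith

end Counting

section GaussianDensity

variable {m : ℝ} {v : ℝ≥0}

lemma gaussianReal_real_eq_setIntegral (hv : v ≠ 0) (s : Set ℝ) :
    (gaussianReal m v).real s = ∫ x in s, gaussianPDFReal m v x := by
  rw [measureReal_def, gaussianReal_apply_eq_integral m hv,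
    ENNReal.toReal_ofReal (integral_nonneg fun x => gaussianPDFReal_nonneg m v x)]

lemma mul_volume_real_le_gaussianReal_real (hv : v ≠ 0) {s : Set ℝ} (hs : MeasurableSet s)
    (hsfin : volume s ≠ ∞) {c : ℝ} (hc : ∀ x ∈ s, c ≤ gaussianPDFReal m v x) :
    c * volume.real s ≤ (gaussianReal m v).real s := by
  rw [gaussianReal_real_eq_setIntegral hv, mul_comm, ← smul_eq_mul, ← setIntegral_const]
  exact setIntegral_mono_on (integrableOn_const hsfin) (integrable_gaussianPDFReal m v).integrableOn
    hs hc

lemma gaussianReal_real_le_mul_volume_real (hv : v ≠ 0) {s : Set ℝ} (hs : MeasurableSet s)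
    (hsfin : volume s ≠ ∞) {c : ℝ} (hc : ∀ x ∈ s, gaussianPDFReal m v x ≤ c) :
    (gaussianReal m v).real s ≤ c * volume.real s := by
  rw [gaussianReal_real_eq_setIntegral hv, mul_comm, ← smul_eq_mul, ← setIntegral_const]
  exact setIntegral_mono_on (integrable_gaussianPDFReal m v).integrableOn (integrableOn_const hsfin)
    hs hc

end GaussianDensity

lemma gaussianPDFReal_zero_one (x : ℝ) :
    gaussianPDFReal 0 1 x = (√(2 * π))⁻¹ * exp (-x ^ 2 / 2) := by
  simp [gaussianPDFReal]

lemma two_le_sqrt_two_mul_pi : 2 ≤ √(2 * π) :=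
  le_sqrt_of_sq_le (by nlinarith [pi_gt_three])

lemma sqrt_two_mul_pi_le_three : √(2 * π) ≤ 3 :=
  sqrt_le_iff.2 ⟨by norm_num, by nlinarith [pi_lt_d2]⟩

noncomputable def gaussianAbsTail (t : ℝ) : ℝ := (gaussianReal 0 1).real {y | t ≤ |y|}

lemma gaussianAbsTail_nonneg (t : ℝ) : 0 ≤ gaussianAbsTail t := measureReal_nonneg

lemma gaussianAbsTail_le_one (t : ℝ) : gaussianAbsTail t ≤ 1 := measureReal_le_one

lemma measurableSet_le_abs (t : ℝ) : MeasurableSet {y : ℝ | t ≤ |y|} :=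
  measurableSet_le measurable_const measurable_abs

-- On `(t, t + 1)` the density is at least `exp (-(t + 1) ^ 2 / 2) / √(2π) ≥ exp (-t ^ 2 - 1) / 3`.
lemma exp_neg_sq_div_nine_le_gaussianAbsTail {t : ℝ} (ht : 0 ≤ t) :
    exp (-t ^ 2) / 9 ≤ gaussianAbsTail t := by
  have hdens : ∀ x ∈ Set.Ioo t (t + 1), exp (-t ^ 2 - 1) / 3 ≤ gaussianPDFReal 0 1 x := by
    rintro x ⟨htx, hxt⟩
    rw [gaussianPDFReal_zero_one, div_eq_inv_mul]
    gcongr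
    · exact sqrt_two_mul_pi_le_three
    · have : x ^ 2 ≤ (t + 1) ^ 2 := pow_le_pow_left₀ (ht.trans htx.le) hxt.le 2
      nlinarith [sq_nonneg (t - 1)]
  have hIoo := mul_volume_real_le_gaussianReal_real one_ne_zero measurableSet_Ioo
    measure_Ioo_lt_top.ne hdens
  rw [volume_real_Ioo_of_le (by linarith), add_sub_cancel_left, mul_one] at hIoo
  have he : exp (-t ^ 2) / 9 ≤ exp (-t ^ 2 - 1) / 3 := by
    have : 3⁻¹ ≤ exp (-1) := by
      rw [exp_neg]
      exact inv_anti₀ (exp_pos 1) (exp_one_lt_d9.le.trans (by norm_num))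
    rw [sub_eq_add_neg, exp_add]
    nlinarith [exp_pos (-t ^ 2)]
  refine he.trans (hIoo.trans (measureReal_mono fun y hy => ?_))
  exact hy.1.le.trans (le_abs_self y)

lemma one_sub_le_gaussianAbsTail {t : ℝ} (ht : 0 ≤ t) : 1 - t ≤ gaussianAbsTail t := by
  have hcompl : {y : ℝ | t ≤ |y|} = (Set.Ioo (-t) t)ᶜ := by
    ext y
    simp only [Set.mem_ofPred_eq, Set.mem_compl_iff, Set.mem_Ioo, ← abs_lt, not_lt]
  have hdens : ∀ x ∈ Set.Ioo (-t) t, gaussianPDFReal 0 1 x ≤ 1 / 2 := fun x _ => by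
    rw [gaussianPDFReal_zero_one, one_div]
    have : exp (-x ^ 2 / 2) ≤ 1 := exp_le_one_iff.2 (by nlinarith [sq_nonneg x])
    calc (√(2 * π))⁻¹ * exp (-x ^ 2 / 2) ≤ 2⁻¹ * 1 := by
          gcongr
          exact two_le_sqrt_two_mul_pi
      _ = 2⁻¹ := mul_one _
  have hIoo := gaussianReal_real_le_mul_volume_real one_ne_zero measurableSet_Ioo
    measure_Ioo_lt_top.ne hdens
  rw [volume_real_Ioo_of_le (by linarith)] at hIoo
  rw [gaussianAbsTail, hcompl, probReal_compl_eq_one_sub measurableSet_Ioo]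
  linarith

section StdGaussian

variable {n : ℕ}

instance : IsProbabilityMeasure (stdGaussian n) := by
  unfold _root_.stdGaussian
  infer_instance

lemma measurePreserving_eval_stdGaussian (i : Fin n) :
    MeasurePreserving (Function.eval i) (stdGaussian n) (gaussianReal 0 1) :=
  measurePreserving_eval _ i

lemma iIndepFun_eval_stdGaussian : iIndepFun (fun i (x : Fin n → ℝ) => x i) (stdGaussian n) :=
  iIndepFun_pi (X := fun _ => id) fun _ => aemeasurable_id

lemma integrable_decRearr (j : Fin n) : Integrable (fun x => decRearr x j) (stdGaussian n) := by
  have habs : ∀ i, Integrable (fun x : Fin n → ℝ => |x i|) (stdGaussian n) := fun i =>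
    (measurePreserving_eval_stdGaussian i).integrable_comp_of_integrable
      ((memLp_id_gaussianReal 1).integrable le_rfl).abs
  refine Integrable.mono' (integrable_finsetSum univ fun i _ => habs i)
    (measurable_decRearr j).aestronglyMeasurable (ae_of_all _ fun x => ?_)
  rw [Real.norm_eq_abs, decRearr, abs_abs]
  exact decRearr_le_sum_abs x j

lemma div_two_le_integral_decRearr (j : Fin n) {t : ℝ} (ht : 0 ≤ t)
    (hprob : 1 / 2 ≤ (stdGaussian n).real {x | (j : ℕ) < #{i | t ≤ |x i|}}) :
    t / 2 ≤ ∫ x, decRearr x j ∂(stdGaussian n) := by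
  have hmarkov := mul_meas_ge_le_integral_of_nonneg (f := fun x => decRearr x j)
    (ae_of_all _ fun x => abs_nonneg _) (integrable_decRearr j) t
  rw [show {x | t ≤ decRearr x j} = {x | (j : ℕ) < #{i | t ≤ |x i|}} from
    Set.ext fun x => le_decRearr_iff x j t] at hmarkov
  nlinarith

-- Chebyshev for the binomial count `#{i | t ≤ |x i|}`, of mean `n p` and variance `n p (1 - p)`.
lemma div_two_le_integral_decRearr_of_variance_le (j : Fin n) {t : ℝ} (ht : 0 ≤ t)
    (hj : (j : ℕ) < n * gaussianAbsTail t)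
    (hvar : 2 * (n * (gaussianAbsTail t * (1 - gaussianAbsTail t))) ≤
      (n * gaussianAbsTail t - (j : ℕ)) ^ 2) :
    t / 2 ≤ ∫ x, decRearr x j ∂(stdGaussian n) := by
  have hp : ∀ i : Fin n, (stdGaussian n).real ((fun x : Fin n → ℝ => x i) ⁻¹' {y | t ≤ |y|}) =
      gaussianAbsTail t := fun i => by
    rw [measureReal_def, (measurePreserving_eval_stdGaussian i).measure_preimage
      (measurableSet_le_abs t).nullMeasurableSet]
    rfl
  refine div_two_le_integral_decRearr j ht <|
    half_le_measureReal_lt_card_of_iIndepFun (fun i => measurable_pi_apply i)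
      iIndepFun_eval_stdGaussian (measurableSet_le_abs t) ?_ ?_ <;>
  simpa only [hp, sum_const, card_univ, Fintype.card_fin, nsmul_eq_mul]

-- `72 = 8 * 9`: the tail bound gives `n p ≥ 8 (j + 1)`, against which the variance
-- `n p (1 - p) ≤ n p` is small.
lemma div_two_le_integral_decRearr_of_tail (j : Fin n) {t : ℝ} (ht : 0 ≤ t)
    (htail : 72 * ((j : ℕ) + 1) ≤ n * exp (-t ^ 2)) :
    t / 2 ≤ ∫ x, decRearr x j ∂(stdGaussian n) := by
  have hp := exp_neg_sq_div_nine_le_gaussianAbsTail ht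
  have hp0 := gaussianAbsTail_nonneg t
  have hp1 := gaussianAbsTail_le_one t
  have hn : (0 : ℝ) ≤ n := n.cast_nonneg
  have hj : (0 : ℝ) ≤ (j : ℕ) := Nat.cast_nonneg _
  have hnp : 8 * ((j : ℕ) + 1) ≤ n * gaussianAbsTail t := by nlinarith
  refine div_two_le_integral_decRearr_of_variance_le j ht (by linarith) ?_
  nlinarith [mul_nonneg hn (mul_nonneg hp0 hp0)]

-- At `t = 1/10` one has `p ≥ 9/10`, which beats `j + 1 ≤ n / 2`.
lemma one_div_twenty_le_integral_decRearr (j : Fin n) (hj : 2 * ((j : ℕ) + 1) ≤ n) :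
    1 / 20 ≤ ∫ x, decRearr x j ∂(stdGaussian n) := by
  have hp : 9 / 10 ≤ gaussianAbsTail (1 / 10) := by
    linarith [one_sub_le_gaussianAbsTail (t := 1 / 10) (by norm_num)]
  have hp1 := gaussianAbsTail_le_one (1 / 10)
  have hjn : 2 * ((j : ℕ) + 1 : ℝ) ≤ n := by exact_mod_cast hj
  have hj0 : (0 : ℝ) ≤ (j : ℕ) := Nat.cast_nonneg _
  have hvar : n * (gaussianAbsTail (1 / 10) * (1 - gaussianAbsTail (1 / 10))) ≤ n / 10 := by
    have : gaussianAbsTail (1 / 10) * (1 - gaussianAbsTail (1 / 10)) ≤ 1 / 10 := by nlinarith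
    nlinarith
  have hgap : 2 * n / 5 + 1 ≤ n * gaussianAbsTail (1 / 10) - (j : ℕ) := by nlinarith
  have h := div_two_le_integral_decRearr_of_variance_le j (t := 1 / 10) (by norm_num)
    (by linarith) (by nlinarith)
  linarith

end StdGaussian

lemma seventy_two_le_exp_five : 72 ≤ exp 5 := by
  have h : exp 5 = exp 1 ^ 5 := by rw [← exp_nat_mul]; norm_num
  rw [h]
  nlinarith [pow_le_pow_left₀ (by norm_num) exp_one_gt_d9.le 5]

/-- `j : Fin n` is a 0-based index: `decRearr g j` is the `(j + 1)`-st largest of the `|gᵢ|`. -/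
theorem stmt19 :
    ∃ c : ℝ, 0 < c ∧
      ∀ (n : ℕ), 2 ≤ n → ∀ j : Fin n, 2 * ((j : ℕ) + 1) ≤ n →
        c * Real.sqrt (Real.log (Real.exp 1 * n / ((j : ℕ) + 1)))
          ≤ ∫ g, decRearr g j ∂(stdGaussian n) := by
  refine ⟨1 / 100, by norm_num, fun n _ j hj => ?_⟩
  set k : ℝ := (j : ℕ) + 1
  set L := log (exp 1 * n / k)
  have hn : (0 : ℝ) < n := Nat.cast_pos.2 j.pos
  by_cases hL : 12 ≤ L
  · set t := √(L - 6)
    have ht2 : t ^ 2 = L - 6 := sq_sqrt (by linarith)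
    have htail : n * exp (-t ^ 2) = exp 5 * k := by
      rw [ht2, neg_sub, exp_sub, exp_log (by positivity), show (6 : ℝ) = 5 + 1 by norm_num,
        exp_add]
      field_simp
    have hE := div_two_le_integral_decRearr_of_tail j (sqrt_nonneg _)
      (by rw [htail]; nlinarith [seventy_two_le_exp_five])
    have hsqrt : √L ≤ 2 * t := sqrt_le_iff.2 ⟨by positivity, by rw [mul_pow, ht2]; linarith⟩
    linarith [sqrt_nonneg (L - 6)]
  · have hsqrt : √L ≤ 5 := sqrt_le_iff.2 ⟨by norm_num, by linarith⟩
    linarith [one_div_twenty_le_integral_decRearr j hj]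
end
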